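/- Let G be a graph, ω an end of G with Dom(ω) finite, such that G_ω = G − Dom(ω) contains a ray of ω belonging to the end ω̂ of G_ω. Then G_ω contains an infinite sequence (Ĥ_i) of distinct ω̂-regions such that Ĥ_{i+1} ⊆ Ĥ_i − ∂_v Ĥ_i and ∂_v Ĥ_{i+1} is a minimal ∂_v Ĥ_i–Ω(Ĥ_{i+1}) separator for every i (i.e., a sequence converging to ω̂). -/

import Mathlib

open scoped ENNReal

namespace Paper

variable {V : Type*} {W : Type*}

/-- Reachability in `G` by a walk avoiding the vertex set `S`. -/
def ReachAvoid (G : SimpleGraph V) (S : Set V) (u v : V) : Prop :=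
  ∃ p : G.Walk u v, ∀ x ∈ p.support, x ∉ S

/-- A ray (one-way infinite path) in `G`. -/
structure IsRay (G : SimpleGraph V) (f : ℕ → V) : Prop where
  inj : Function.Injective f
  adj : ∀ n, G.Adj (f n) (f (n + 1))

/-- Two rays are equivalent (belong to the same end) if no finite vertex set
separates them: for every finite `S` some vertex of the first ray can be joined
to some vertex of the second by a walk avoiding `S`. -/
def EquivRay (G : SimpleGraph V) (f g : ℕ → V) : Prop :=
  ∀ S : Set V, S.Finite → ∃ m n, ReachAvoid G S (f m) (g n)

/-- The set of ends of `G`: rays modulo equivalence. -/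
def Ends (G : SimpleGraph V) :=
  Quot (fun f g : {f : ℕ → V // IsRay G f} => EquivRay G f.1 g.1)

/-- `v` dominates the ray `f`: there are infinitely many `v`–`V(f)` paths
pairwise disjoint except in `v`. -/
def DominatesRay (G : SimpleGraph V) (v : V) (f : ℕ → V) : Prop :=
  ∃ (g : ℕ → ℕ) (p : ∀ n, G.Walk v (f (g n))),
    Function.Injective g ∧ (∀ n, (p n).IsPath) ∧
    ∀ m n, m ≠ n → ∀ x ∈ (p m).support, x ∈ (p n).support → x = v

/-- The set of vertices dominating the end of the ray `r`. -/
def Dom (G : SimpleGraph V) (r : ℕ → V) : Set V := {v | DominatesRay G v r}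

/-- Vertex-boundary of the vertex set `A`. -/
def vBoundary (G : SimpleGraph V) (A : Set V) : Set V :=
  {x | x ∈ A ∧ ∃ y, y ∉ A ∧ G.Adj x y}

/-- Edge-boundary of the vertex set `A`. -/
def eBoundary (G : SimpleGraph V) (A : Set V) : Set (Sym2 V) :=
  {e | ∃ x y, x ∈ A ∧ y ∉ A ∧ G.Adj x y ∧ e = s(x, y)}

/-- `S` is a `V'`–`Ω(A)` separator: `V' ⊄ S` and no component of `G - S`
contains both a vertex of `V'` and (the tail of) a ray lying in `A`. -/
def SepVertsEndsIn (G : SimpleGraph V) (V' S A : Set V) : Prop :=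
  ¬ V' ⊆ S ∧ ∀ v ∈ V', ∀ f : ℕ → V, IsRay G f → Set.range f ⊆ A →
    ∀ n, (∀ m, n ≤ m → f m ∉ S) → ¬ ReachAvoid G S v (f n)

/-- `S` is an inclusion-minimal `V'`–`Ω(A)` separator. -/
def MinSepVertsEndsIn (G : SimpleGraph V) (V' S A : Set V) : Prop :=
  SepVertsEndsIn G V' S A ∧ ∀ S' ⊂ S, ¬ SepVertsEndsIn G V' S' A

/-- The graph `G_ω`: `G` minus the dominating vertices of the end of `r`. -/
def Gmin (G : SimpleGraph V) (r : ℕ → V) : SimpleGraph ((Dom G r)ᶜ : Set V) :=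
  G.induce ((Dom G r)ᶜ : Set V)

/-- A ray of `G_ω` belonging to (the unique end `ω̂` induced by) the end `ω` of
the ray `r`. -/
def InDeletedEnd (G : SimpleGraph V) (r : ℕ → V)
    (f : ℕ → ((Dom G r)ᶜ : Set V)) : Prop :=
  IsRay (Gmin G r) f ∧ EquivRay G (fun n => (f n : V)) r

/-- An `ω̂`-region of `G_ω`: induced connected, finite vertex-boundary,
containing a ray of `ω̂`. -/
def IsOmegaRegion (G : SimpleGraph V) (r : ℕ → V)
    (A : Set ((Dom G r)ᶜ : Set V)) : Prop :=
  ((Gmin G r).induce A).Connected ∧ (vBoundary (Gmin G r) A).Finite ∧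
    ∃ f, InDeletedEnd G r f ∧ Set.range f ⊆ A

/-- `(Ĥ_i) → ω̂` : a sequence of distinct nested `ω̂`-regions whose
vertex-boundaries are minimal separators. -/
def Converges (G : SimpleGraph V) (r : ℕ → V)
    (A : ℕ → Set ((Dom G r)ᶜ : Set V)) : Prop :=
  Function.Injective A ∧ (∀ i, IsOmegaRegion G r (A i)) ∧
    (∀ i, A (i + 1) ⊆ A i \ vBoundary (Gmin G r) (A i)) ∧
    (∀ i, MinSepVertsEndsIn (Gmin G r) (vBoundary (Gmin G r) (A i))
      (vBoundary (Gmin G r) (A (i + 1))) (A (i + 1)))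

/-- The ratio `|∂_e A| / |∂_v A|`, as an extended nonnegative real. -/
noncomputable def bratio (G : SimpleGraph V) (A : Set V) : ℝ≥0∞ :=
  ((eBoundary G A).encard : ℝ≥0∞) / ((vBoundary G A).encard : ℝ≥0∞)

open Classical in
/-- The relative degree `d_{e/v}` of the end of the ray `r`. -/
noncomputable def relDegree (G : SimpleGraph V) (r : ℕ → V) : ℝ≥0∞ :=
  if (Dom G r).Infinite ∨ ¬ ∃ f, InDeletedEnd G r f then
    ((Dom G r).encard : ℝ≥0∞)
  else
    ((Dom G r).encard : ℝ≥0∞) +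
      ⨅ A : {A : ℕ → Set ((Dom G r)ᶜ : Set V) // Converges G r A},
        Filter.atTop.liminf fun i => bratio (Gmin G r) (A.1 i)

/-- The degree of a vertex, as an extended real. -/
noncomputable def degER (G : SimpleGraph V) (v : V) : EReal :=
  (((G.neighborSet v).encard : ℝ≥0∞) : EReal)

/-- A subdivision of `K_k` in `G` with branching vertices `b 0, …, b (k-1)`. -/
def HasTKOn (G : SimpleGraph V) {k : ℕ} (b : Fin k ↪ V) : Prop :=
  ∃ p : ∀ i j : Fin k, G.Walk (b i) (b j),
    (∀ i j, i ≠ j → (p i j).IsPath) ∧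
    (∀ i j, i ≠ j → ∀ x ∈ (p i j).support, x ∈ Set.range b → x = b i ∨ x = b j) ∧
    (∀ i j i' j', i ≠ j → i' ≠ j' → s(i, j) ≠ s(i', j') →
      ∀ x ∈ (p i j).support, x ∈ (p i' j').support → x ∈ Set.range b)

/-- `K_k` is a topological minor of `G`. -/
def HasTopK (G : SimpleGraph V) (k : ℕ) : Prop :=
  ∃ b : Fin k ↪ V, HasTKOn G b

/-- A subdivision of `K_{ℵ₀}` in `G` with branching vertices `b 0, b 1, …`. -/
def HasTKInfOn (G : SimpleGraph V) (b : ℕ ↪ V) : Prop :=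
  ∃ p : ∀ i j : ℕ, G.Walk (b i) (b j),
    (∀ i j, i ≠ j → (p i j).IsPath) ∧
    (∀ i j, i ≠ j → ∀ x ∈ (p i j).support, x ∈ Set.range b → x = b i ∨ x = b j) ∧
    (∀ i j i' j', i ≠ j → i' ≠ j' → s(i, j) ≠ s(i', j') →
      ∀ x ∈ (p i j).support, x ∈ (p i' j').support → x ∈ Set.range b)

/-- `K_k` is a minor of `G` (with finite branch sets). -/
def HasKMinor (G : SimpleGraph V) (k : ℕ) : Prop :=
  ∃ B : Fin k → Finset V,
    (∀ i, (B i).Nonempty) ∧ (∀ i j, i ≠ j → Disjoint (B i) (B j)) ∧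
    (∀ i, (G.induce (B i : Set V)).Connected) ∧
    (∀ i j, i ≠ j → ∃ x ∈ B i, ∃ y ∈ B j, G.Adj x y)

/-- The average degree of the finite induced subgraph of `G` on `s`. -/
noncomputable def avgDegOn (G : SimpleGraph V) (s : Finset V) : ℝ :=
  (∑ v ∈ s, ((G.neighborSet v ∩ ↑s).ncard : ℝ)) / s.card

/-- `G` is rayless. -/
def Rayless (G : SimpleGraph V) : Prop := ¬ ∃ f : ℕ → V, IsRay G f

/-- The average degree of the vertex set `F` into `A` in `G`. -/
noncomputable def avgDegIn (G : SimpleGraph V) (A F : Set V) : ℝ :=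
  (∑ᶠ v ∈ F, ((G.neighborSet v ∩ A).ncard : ℝ)) / F.ncard


/-!
Fix a ray `f` of `ω̂` in `G_ω`. Every vertex `v` of `G_ω` is separated from a tail of `f` by a
finite vertex set: otherwise, as `f` is equivalent to `r` in `G`, one can pick infinitely many
`v`–`r` paths that are disjoint apart from `v`, so `v` would dominate `ω`. Consequently every
finite vertex set `X` has a finite separator from the tail of `f` that avoids `X`, and hence an
inclusion-minimal one `S`. By minimality each vertex of `S` has a neighbour in the component `C`
of `G_ω - S` containing a tail of `f` and a neighbour outside `C ∪ S`; so the region `C ∪ S` is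
connected with vertex-boundary exactly `S`. Iterating `X ↦ S` from `X = {f 0}` gives the
regions, and each new region lies inside the previous component `C`.
-/

open SimpleGraph

section

variable {α β : Type*} {H : SimpleGraph α} {P S T : Set α} {u v w z : α}

namespace ReachAvoid

lemma mono (hTS : T ⊆ S) (h : ReachAvoid H S u v) : ReachAvoid H T u v :=
  let ⟨p, hp⟩ := h
  ⟨p, fun x hx hxT => hp x hx (hTS hxT)⟩

lemma refl (hu : u ∉ S) : ReachAvoid H S u u :=
  ⟨.nil, by simpa using hu⟩

lemma symm (h : ReachAvoid H S u v) : ReachAvoid H S v u :=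
  let ⟨p, hp⟩ := h
  ⟨p.reverse, fun x hx => hp x (by simpa using hx)⟩

lemma trans (h₁ : ReachAvoid H S u v) (h₂ : ReachAvoid H S v w) : ReachAvoid H S u w := by
  obtain ⟨p, hp⟩ := h₁
  obtain ⟨q, hq⟩ := h₂
  exact ⟨p.append q, fun x hx => ((Walk.mem_support_append_iff _ _).1 hx).elim (hp x) (hq x)⟩

lemma left_notMem (h : ReachAvoid H S u v) : u ∉ S :=
  let ⟨p, hp⟩ := h
  hp u p.start_mem_support

lemma cons (huv : H.Adj u v) (hu : u ∉ S) (h : ReachAvoid H S v w) : ReachAvoid H S u w :=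
  let ⟨p, hp⟩ := h
  ⟨.cons huv p, by simpa [hu] using hp⟩

lemma map {H' : SimpleGraph β} {S : Set β} (φ : H →g H') (h : ReachAvoid H (φ ⁻¹' S) u v) :
    ReachAvoid H' S (φ u) (φ v) :=
  let ⟨p, hp⟩ := h
  ⟨p.map φ, by simpa using hp⟩

/-- `x`–`y` is the edge along which a walk avoiding `P` leaves `T` for the last time. -/
lemma exists_adj_reachAvoid_union (h : ReachAvoid H P u w) (hT : ¬ ReachAvoid H (P ∪ T) u w)
    (hw : w ∉ T) : ∃ x ∈ T, ∃ y, H.Adj x y ∧ ReachAvoid H (P ∪ T) y w := by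
  obtain ⟨p, hp⟩ := h
  induction p with
  | nil => exact absurd (refl fun h => h.elim (hp _ (by simp)) hw) hT
  | @cons a b c hadj p ih =>
    by_cases hq : ReachAvoid H (P ∪ T) b c
    · refine ⟨_, ?_, _, hadj, hq⟩
      by_contra hu
      exact hT (hq.cons hadj fun h => h.elim (hp _ (by simp)) hu)
    · exact ih hq hw fun x hx => hp x (by simp [hx])

end ReachAvoid

lemma reachAvoid_of_mem_support (p : H.Walk u w) (hp : ∀ x ∈ p.support, x ∉ S)
    (hz : z ∈ p.support) : ReachAvoid H S z w := by
  classical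
  exact ⟨p.dropUntil z hz, fun x hx => hp x (p.support_dropUntil_subset_support hz hx)⟩

end

section

variable {α β : Type*} {H : SimpleGraph α} {f g : ℕ → α}

lemma IsRay.map {H' : SimpleGraph β} (φ : H ↪g H') (hf : IsRay H f) : IsRay H' (φ ∘ f) :=
  ⟨φ.injective.comp hf.inj, fun n => φ.map_adj_iff.2 (hf.adj n)⟩

lemma IsRay.comp_add (hf : IsRay H f) (N : ℕ) : IsRay H (fun n => f (n + N)) :=
  ⟨fun a b h => by simpa using hf.inj h,
    fun n => by simpa [add_right_comm] using hf.adj (n + N)⟩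

lemma EquivRay.comp_add (h : EquivRay H f g) (N : ℕ) : EquivRay H (fun n => f (n + N)) g := by
  intro S hS
  obtain ⟨m, n, hmn⟩ := h (S ∪ f '' Set.Iio N) (hS.union ((Set.finite_Iio N).image f))
  have hNm : N ≤ m := not_lt.1 fun hm => hmn.left_notMem (Or.inr ⟨m, hm, rfl⟩)
  exact ⟨m - N, n, by simpa [Nat.sub_add_cancel hNm] using hmn.mono Set.subset_union_left⟩

lemma IsRay.exists_tail_notMem (hf : IsRay H f) {S : Set α} (hS : S.Finite) :
    ∃ N, ∀ k, N ≤ k → f k ∉ S := by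
  obtain ⟨N, hN⟩ := (hS.preimage hf.inj.injOn).bddAbove
  exact ⟨N + 1, fun k hk hfk => by have := hN hfk; omega⟩

lemma IsRay.reachAvoid {S : Set α} (hf : IsRay H f) {m n : ℕ} (hS : ∀ k, m ≤ k → f k ∉ S)
    (hmn : m ≤ n) : ReachAvoid H S (f m) (f n) := by
  induction n, hmn using Nat.le_induction with
  | base => exact .refl (hS m le_rfl)
  | succ n hmn ih => exact ih.trans (.cons (hf.adj n) (hS n hmn) (.refl (hS (n + 1) (by omega))))

end

section

variable {α β : Type*} {H : SimpleGraph α} {f : ℕ → α} {S S' : Set α} {u w : α} {N : ℕ}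

/-- The component of `H - S` containing a tail of `f` (empty if `f` meets `S` infinitely often). -/
def tailComponent (H : SimpleGraph α) (f : ℕ → α) (S : Set α) : Set α :=
  {w | ∃ m, (∀ k, m ≤ k → f k ∉ S) ∧ ReachAvoid H S w (f m)}

def region (H : SimpleGraph α) (f : ℕ → α) (S : Set α) : Set α :=
  tailComponent H f S ∪ S

lemma notMem_of_mem_tailComponent (hw : w ∈ tailComponent H f S) : w ∉ S :=
  let ⟨_, _, h⟩ := hw
  h.left_notMem

lemma tailComponent_subset_region_diff : tailComponent H f S ⊆ region H f S \ S :=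
  fun _ hw => ⟨Or.inl hw, notMem_of_mem_tailComponent hw⟩

lemma tailComponent_anti (hS : S' ⊆ S) : tailComponent H f S ⊆ tailComponent H f S' :=
  fun _ ⟨m, hm, h⟩ => ⟨m, fun k hk h' => hm k hk (hS h'), h.mono hS⟩

lemma apply_mem_tailComponent (hN : ∀ k, N ≤ k → f k ∉ S) {n : ℕ} (hn : N ≤ n) :
    f n ∈ tailComponent H f S :=
  ⟨n, fun k hk => hN k (hn.trans hk), .refl (hN n hn)⟩

lemma range_comp_add_subset_tailComponent (hN : ∀ k, N ≤ k → f k ∉ S) :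
    Set.range (fun n => f (n + N)) ⊆ tailComponent H f S := by
  rintro _ ⟨n, rfl⟩
  exact apply_mem_tailComponent hN (by omega)

lemma mem_tailComponent_of_reachAvoid (h : ReachAvoid H S u w) (hw : w ∈ tailComponent H f S) :
    u ∈ tailComponent H f S :=
  let ⟨m, hm, h'⟩ := hw
  ⟨m, hm, h.trans h'⟩

lemma mem_tailComponent_of_adj (hu : u ∈ tailComponent H f S) (hwu : H.Adj w u) (hw : w ∉ S) :
    w ∈ tailComponent H f S :=
  mem_tailComponent_of_reachAvoid (.cons hwu hw (.refl (notMem_of_mem_tailComponent hu))) hu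

lemma reachAvoid_of_mem_tailComponent (hf : IsRay H f) (hw : w ∈ tailComponent H f S)
    (hN : ∀ k, N ≤ k → f k ∉ S) : ReachAvoid H S w (f N) := by
  obtain ⟨m, hm, h⟩ := hw
  rcases le_total m N with hmN | hNm
  · exact h.trans (hf.reachAvoid hm hmN)
  · exact h.trans (hf.reachAvoid hN hNm).symm

lemma mem_tailComponent_map {H' : SimpleGraph β} {S : Set β} (φ : H →g H')
    (hw : w ∈ tailComponent H f (φ ⁻¹' S)) : φ w ∈ tailComponent H' (φ ∘ f) S :=
  let ⟨m, hm, h⟩ := hw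
  ⟨m, hm, h.map φ⟩

def SeparatesTail (H : SimpleGraph α) (f : ℕ → α) (X S : Set α) : Prop :=
  ∀ x ∈ X, x ∉ tailComponent H f S

lemma tailComponent_subset_of_separatesTail (hf : IsRay H f) (hS : S.Finite) (hS' : S'.Finite)
    (h : SeparatesTail H f S S') : tailComponent H f S' ⊆ tailComponent H f S := by
  intro w hw
  obtain ⟨N, hN⟩ := hf.exists_tail_notMem (hS.union hS')
  obtain ⟨p, hp⟩ := reachAvoid_of_mem_tailComponent hf hw fun k hk h => hN k hk (Or.inr h)
  have hN' : ∀ k, N ≤ k → f k ∉ S' := fun k hk h => hN k hk (Or.inr h)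
  exact ⟨N, fun k hk h => hN k hk (Or.inl h), p,
    fun z hz hzS => h z hzS ⟨N, hN', reachAvoid_of_mem_support p hp hz⟩⟩

end

section

variable {G : SimpleGraph V} {f r : ℕ → V} {v : V}

/-- Infinitely many `v`–`r` paths, disjoint apart from `v`, are chosen one after another, each
avoiding the previous ones and ending further along `r`. -/
lemma dominatesRay_of_forall_reachAvoid
    (h : ∀ F : Set V, F.Finite → v ∉ F → ∀ M, ∃ m, M < m ∧ ReachAvoid G F v (r m)) :
    DominatesRay G v r := by
  classical
  have step : ∀ (F : Finset V) (M : ℕ), ∃ m, M < m ∧ ∃ p : G.Walk v (r m),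
      p.IsPath ∧ ∀ x ∈ p.support, x ∈ F → x = v := by
    intro F M
    obtain ⟨m, hMm, p, hp⟩ := h (F.erase v) (F.erase v).finite_toSet (by simp) M
    refine ⟨m, hMm, p.bypass, p.bypass_isPath, fun x hx hxF => ?_⟩
    by_contra hxv
    exact hp x (p.support_bypass_subset_support hx) (by simp [hxv, hxF])
  choose m hm p hp hpF using step
  let s : ℕ → Finset V × ℕ := fun n =>
    Nat.rec (∅, 0) (fun _ s => (s.1 ∪ (p s.1 s.2).support.toFinset, m s.1 s.2)) n
  have hs : Monotone fun n => (s n).1 := monotone_nat_of_le_succ fun _ => Finset.subset_union_left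
  have hsupp : ∀ a b, a < b → ∀ x ∈ (p (s a).1 (s a).2).support, x ∈ (s b).1 :=
    fun a b hab x hx => hs (Nat.succ_le_of_lt hab) (Finset.mem_union_right _ (by simpa using hx))
  refine ⟨fun n => m (s n).1 (s n).2, fun n => p (s n).1 (s n).2,
    (strictMono_nat_of_lt_succ fun n => hm _ _).injective, fun n => hp _ _, ?_⟩
  intro a b hab x hxa hxb
  rcases hab.lt_or_gt with hab | hab
  · exact hpF _ _ x hxb (hsupp a b hab x hxa)
  · exact hpF _ _ x hxa (hsupp b a hab x hxb)

lemma EquivRay.exists_reachAvoid_of_mem_tailComponent (hf : IsRay G f) (hfr : EquivRay G f r)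
    {F : Set V} (hF : F.Finite) (hv : v ∈ tailComponent G f F) (M : ℕ) :
    ∃ m, M < m ∧ ReachAvoid G F v (r m) := by
  obtain ⟨m₁, hm₁, hv⟩ := hv
  obtain ⟨m₂, n, hmn⟩ := hfr (F ∪ r '' Set.Iic M ∪ f '' Set.Iio m₁)
    ((hF.union ((Set.finite_Iic M).image r)).union ((Set.finite_Iio m₁).image f))
  have hm₁₂ : m₁ ≤ m₂ := not_lt.1 fun h => hmn.left_notMem (Or.inr ⟨m₂, h, rfl⟩)
  have hMn : M < n := not_le.1 fun h => hmn.symm.left_notMem (Or.inl (Or.inr ⟨n, h, rfl⟩))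
  exact ⟨n, hMn, hv.trans ((hf.reachAvoid hm₁ hm₁₂).trans
    (hmn.mono (Set.subset_union_left.trans Set.subset_union_left)))⟩

end

section

variable {α : Type*} {H : SimpleGraph α} {f : ℕ → α} {S X : Set α} {s : α}

def FinitelySeparable (H : SimpleGraph α) (f : ℕ → α) : Prop :=
  ∀ v, ∃ S : Set α, S.Finite ∧ v ∉ S ∧ v ∉ tailComponent H f S

def IsMinTailSep (H : SimpleGraph α) (f : ℕ → α) (X S : Set α) : Prop :=
  S.Finite ∧ Disjoint S X ∧ Minimal (SeparatesTail H f X) S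

lemma exists_separatesTail (hf : IsRay H f) (hsep : FinitelySeparable H f) (hX : X.Finite) :
    ∃ S, S.Finite ∧ Disjoint S X ∧ SeparatesTail H f X S := by
  choose T hT hxT hxC using hsep
  set U := ⋃ x ∈ X, T x
  have hU : U.Finite := hX.biUnion fun x _ => hT x
  refine ⟨U \ X, hU.sdiff, Set.disjoint_sdiff_left, fun v hv hvC => ?_⟩
  obtain ⟨N, hN⟩ := hf.exists_tail_notMem (hU.union hX)
  have hvN := reachAvoid_of_mem_tailComponent hf hvC fun k hk h => hN k hk (Or.inl h.1)
  obtain ⟨x, hx, y, hxy, hy⟩ := hvN.exists_adj_reachAvoid_union (T := X)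
    (fun h => h.left_notMem (Or.inr hv)) fun h => hN N le_rfl (Or.inr h)
  rw [Set.sdiff_union_self] at hy
  refine hxC x ⟨N, fun k hk h => hN k hk (Or.inl (Set.mem_biUnion hx h)), .cons hxy (hxT x) ?_⟩
  exact hy.mono ((Set.subset_biUnion_of_mem hx).trans Set.subset_union_left)

lemma exists_isMinTailSep (hf : IsRay H f) (hsep : FinitelySeparable H f) (hX : X.Finite) :
    ∃ S, IsMinTailSep H f X S := by
  obtain ⟨S₀, hS₀, hdisj, hsep₀⟩ := exists_separatesTail hf hsep hX
  have hfin : {T | T ⊆ S₀ ∧ SeparatesTail H f X T}.Finite :=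
    hS₀.finite_subsets.subset fun _ hT => hT.1
  obtain ⟨S, hSS₀, hmin⟩ := hfin.exists_le_minimal ⟨subset_rfl, hsep₀⟩
  exact ⟨S, hS₀.subset hSS₀, hdisj.mono_left hSS₀, hmin.prop.2,
    fun T hT hTS => hmin.2 ⟨hTS.trans hSS₀, hT⟩ hTS⟩

namespace IsMinTailSep

lemma exists_reachAvoid (hf : IsRay H f) (h : IsMinTailSep H f X S) (hs : s ∈ S) {N : ℕ}
    (hN : ∀ k, N ≤ k → f k ∉ S) :
    ∃ x ∈ X, ReachAvoid H (S \ {s}) x (f N) ∧ ¬ ReachAvoid H S x (f N) := by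
  have := h.2.2.not_prop_of_ssubset (Set.sdiff_singleton_ssubset.2 hs)
  simp only [SeparatesTail, not_forall, not_not] at this
  obtain ⟨x, hx, hxC⟩ := this
  exact ⟨x, hx, reachAvoid_of_mem_tailComponent hf hxC fun k hk h' => hN k hk h'.1,
    fun h' => h.2.2.prop x hx ⟨N, hN, h'⟩⟩

lemma exists_adj_mem_tailComponent (hf : IsRay H f) (h : IsMinTailSep H f X S) (hs : s ∈ S) :
    ∃ u ∈ tailComponent H f S, H.Adj s u := by
  obtain ⟨N, hN⟩ := hf.exists_tail_notMem h.1
  obtain ⟨x, -, hx, hxS⟩ := h.exists_reachAvoid hf hs hN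
  have hS : S \ {s} ∪ {s} = S := Set.sdiff_union_of_subset (Set.singleton_subset_iff.2 hs)
  rw [← hS] at hxS
  obtain ⟨_, rfl, u, hsu, hu⟩ :=
    hx.exists_adj_reachAvoid_union hxS fun hs' => hN N le_rfl (hs' ▸ hs)
  rw [hS] at hu
  exact ⟨u, ⟨N, hN, hu⟩, hsu⟩

lemma exists_adj_notMem_region (hf : IsRay H f) (h : IsMinTailSep H f X S) (hs : s ∈ S) :
    ∃ u ∉ region H f S, H.Adj s u := by
  obtain ⟨N, hN⟩ := hf.exists_tail_notMem h.1
  obtain ⟨x, hxX, hx, hxS⟩ := h.exists_reachAvoid hf hs hN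
  have hS : S \ {s} ∪ {s} = S := Set.sdiff_union_of_subset (Set.singleton_subset_iff.2 hs)
  rw [← hS] at hxS
  obtain ⟨_, rfl, u, hsu, hu⟩ := hx.symm.exists_adj_reachAvoid_union (fun h' => hxS h'.symm)
    fun hxs => Set.disjoint_left.1 h.2.1 (hxs ▸ hs) hxX
  rw [hS] at hu
  refine ⟨u, fun hu' => hu'.elim (fun hC => ?_) hu.left_notMem, hsu⟩
  exact h.2.2.prop x hxX (mem_tailComponent_of_reachAvoid hu.symm hC)

lemma exists_mem_tailComponent_empty (hf : IsRay H f) (h : IsMinTailSep H f X S)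
    (hX : ∃ x ∈ X, x ∈ tailComponent H f ∅) : ∃ s ∈ S, s ∈ tailComponent H f ∅ := by
  obtain ⟨x, hxX, hx⟩ := hX
  obtain ⟨s, hs⟩ : S.Nonempty :=
    Set.nonempty_iff_ne_empty.2 fun hS => h.2.2.prop x hxX (hS ▸ hx)
  obtain ⟨u, hu, hsu⟩ := h.exists_adj_mem_tailComponent hf hs
  exact ⟨s, hs, mem_tailComponent_of_adj (tailComponent_anti (Set.empty_subset S) hu) hsu
    (Set.notMem_empty s)⟩

lemma vBoundary_region (hf : IsRay H f) (h : IsMinTailSep H f X S) :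
    vBoundary H (region H f S) = S := by
  ext x
  refine ⟨fun ⟨hx, y, hy, hxy⟩ => hx.resolve_left fun hxC => hy (Or.inl ?_), fun hx => ?_⟩
  · exact mem_tailComponent_of_adj hxC hxy.symm fun hyS => hy (Or.inr hyS)
  · obtain ⟨u, hu, hxu⟩ := h.exists_adj_notMem_region hf hx
    exact ⟨Or.inr hx, u, hu, hxu⟩

lemma connected_induce_region (hf : IsRay H f) (h : IsMinTailSep H f X S) :
    (H.induce (region H f S)).Connected := by
  obtain ⟨N, hN⟩ := hf.exists_tail_notMem h.1
  have hfN : f N ∈ region H f S := Or.inl (apply_mem_tailComponent hN le_rfl)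
  have hC : ∀ w (hw : w ∈ tailComponent H f S),
      (H.induce (region H f S)).Reachable ⟨f N, hfN⟩ ⟨w, Or.inl hw⟩ := by
    intro w hw
    obtain ⟨p, hp⟩ := reachAvoid_of_mem_tailComponent hf hw hN
    have hp' : ∀ z ∈ p.support, z ∈ region H f S :=
      fun z hz => Or.inl ⟨N, hN, reachAvoid_of_mem_support p hp hz⟩
    exact (p.induce _ hp').reachable.symm
  refine (connected_iff_exists_forall_reachable _).2 ⟨⟨f N, hfN⟩, ?_⟩
  rintro ⟨w, hw | hw⟩
  · exact hC w hw
  · obtain ⟨u, hu, hwu⟩ := h.exists_adj_mem_tailComponent hf hw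
    exact (hC u hu).trans (Adj.reachable (G := H.induce _) (u := ⟨u, Or.inl hu⟩) hwu.symm)

lemma region_subset_tailComponent (hf : IsRay H f) (h : IsMinTailSep H f X S) (hX : X.Finite) :
    region H f S ⊆ tailComponent H f X := by
  have hC := tailComponent_subset_of_separatesTail hf hX h.1 h.2.2.prop
  rintro w (hw | hw)
  · exact hC hw
  · obtain ⟨u, hu, hwu⟩ := h.exists_adj_mem_tailComponent hf hw
    exact mem_tailComponent_of_adj (hC hu) hwu (Set.disjoint_left.1 h.2.1 hw)

lemma minSepVertsEndsIn (hf : IsRay H f) (h : IsMinTailSep H f X S) (hX : X.Nonempty) :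
    MinSepVertsEndsIn H X S (region H f S) := by
  refine ⟨⟨fun hXS => ?_, fun v hv g _ hg n hn hvg => ?_⟩, fun T hTS hT => ?_⟩
  · obtain ⟨x, hx⟩ := hX
    exact Set.disjoint_left.1 h.2.1 (hXS hx) hx
  · have hgn : g n ∈ tailComponent H f S := (hg ⟨n, rfl⟩).resolve_right (hn n le_rfl)
    exact h.2.2.prop v hv (mem_tailComponent_of_reachAvoid hvg hgn)
  · obtain ⟨x, hx, hxC⟩ : ∃ x ∈ X, x ∈ tailComponent H f T := by
      simpa [SeparatesTail] using h.2.2.not_prop_of_ssubset hTS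
    obtain ⟨N, hN⟩ := hf.exists_tail_notMem h.1
    have hNT : ∀ k, N ≤ k → f k ∉ T := fun k hk h' => hN k hk (hTS.subset h')
    refine hT.2 x hx _ (hf.comp_add N)
      ((range_comp_add_subset_tailComponent hN).trans Set.subset_union_left) 0
      (fun k _ => hNT (k + N) (by omega)) ?_
    simpa using reachAvoid_of_mem_tailComponent hf hxC hNT

end IsMinTailSep

open Classical in
noncomputable def minTailSep (H : SimpleGraph α) (f : ℕ → α) (X : Set α) : Set α :=
  if h : ∃ S, IsMinTailSep H f X S then h.choose else ∅

lemma isMinTailSep_minTailSep (hf : IsRay H f) (hsep : FinitelySeparable H f) (hX : X.Finite) :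
    IsMinTailSep H f X (minTailSep H f X) := by
  have h := exists_isMinTailSep hf hsep hX
  rw [minTailSep, dif_pos h]
  exact h.choose_spec

noncomputable def tailSepSeq (H : SimpleGraph α) (f : ℕ → α) : ℕ → Set α
  | 0 => {f 0}
  | n + 1 => minTailSep H f (tailSepSeq H f n)

lemma isMinTailSep_tailSepSeq (hf : IsRay H f) (hsep : FinitelySeparable H f) (n : ℕ) :
    IsMinTailSep H f (tailSepSeq H f n) (tailSepSeq H f (n + 1)) ∧
      ∃ s ∈ tailSepSeq H f (n + 1), s ∈ tailComponent H f ∅ := by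
  have key : ∀ X : Set α, X.Finite → (∃ x ∈ X, x ∈ tailComponent H f ∅) →
      IsMinTailSep H f X (minTailSep H f X) ∧
        ∃ s ∈ minTailSep H f X, s ∈ tailComponent H f ∅ :=
    fun X hX hX' =>
      ⟨isMinTailSep_minTailSep hf hsep hX,
        (isMinTailSep_minTailSep hf hsep hX).exists_mem_tailComponent_empty hf hX'⟩
  induction n with
  | zero =>
    exact key _ (Set.finite_singleton _)
      ⟨f 0, rfl, apply_mem_tailComponent (fun _ _ => Set.notMem_empty _) le_rfl⟩
  | succ n ih => exact key _ ih.1.1 ih.2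

end

lemma finitelySeparable_gmin {G : SimpleGraph V} {r : ℕ → V}
    {f : ℕ → ((Dom G r)ᶜ : Set V)} (hf : IsRay (Gmin G r) f)
    (hfr : EquivRay G (fun n => (f n : V)) r) : FinitelySeparable (Gmin G r) f := by
  intro v
  by_contra! h
  refine v.2 (dominatesRay_of_forall_reachAvoid fun F hF hvF => ?_)
  have hv := h (Subtype.val ⁻¹' F) (hF.preimage Subtype.val_injective.injOn) hvF
  exact hfr.exists_reachAvoid_of_mem_tailComponent (hf.map (Embedding.induce _)) hF
    (mem_tailComponent_map (Embedding.induce _).toHom hv)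

theorem exists_converging_sequence_general (G : SimpleGraph V) (r : ℕ → V)
    (hray : ∃ f, InDeletedEnd G r f) :
    ∃ A : ℕ → Set ((Dom G r)ᶜ : Set V), Converges G r A := by
  obtain ⟨f, hf, hfr⟩ := hray
  have hσ := isMinTailSep_tailSepSeq hf (finitelySeparable_gmin hf hfr)
  set σ := tailSepSeq (Gmin G r) f
  have hne : ∀ i, (σ (i + 1)).Nonempty := fun i => (hσ i).2.imp fun _ h => h.1
  have hbd : ∀ i, vBoundary (Gmin G r) (region (Gmin G r) f (σ (i + 1))) = σ (i + 1) :=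
    fun i => (hσ i).1.vBoundary_region hf
  have hnest : ∀ i,
      region (Gmin G r) f (σ (i + 2)) ⊆ region (Gmin G r) f (σ (i + 1)) \ σ (i + 1) :=
    fun i => ((hσ (i + 1)).1.region_subset_tailComponent hf (hσ i).1.1).trans
      tailComponent_subset_region_diff
  refine ⟨fun i => region (Gmin G r) f (σ (i + 1)), ?_, fun i => ⟨?_, ?_, ?_⟩, fun i => ?_,
    fun i => ?_⟩
  · refine (strictAnti_nat_of_succ_lt fun i => ?_).injective
    obtain ⟨s, hs⟩ := hne i
    exact LE.le.ssubset_of_mem_notMem ((hnest i).trans Set.sdiff_subset)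
      (Or.inr hs) fun hs' => (hnest i hs').2 hs
  · exact (hσ i).1.connected_induce_region hf
  · exact hbd i ▸ (hσ i).1.1
  · obtain ⟨N, hN⟩ := hf.exists_tail_notMem (hσ i).1.1
    exact ⟨_, ⟨hf.comp_add N, hfr.comp_add N⟩,
      (range_comp_add_subset_tailComponent hN).trans Set.subset_union_left⟩
  · exact hbd i ▸ hnest i
  · rw [hbd, hbd]
    exact (hσ (i + 1)).1.minSepVertsEndsIn hf (hne i)

/-- if `Dom(ω)` is finite and `G_ω` contains a ray of `ω`, then
`G_ω` contains a sequence of distinct nested `ω̂`-regions with the minimal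
separation property, i.e. a sequence converging to `ω̂`. -/
theorem exists_converging_sequence (G : SimpleGraph V) (r : ℕ → V)
    (hr : IsRay G r) (hfin : (Dom G r).Finite)
    (hray : ∃ f, InDeletedEnd G r f) :
    ∃ A : ℕ → Set ((Dom G r)ᶜ : Set V), Converges G r A :=
  exists_converging_sequence_general G r hray

end Paper
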